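/- In the symmetric VWAP setting, for any fixed prices (q, q̄) with 0 ≤ q < q̄ ≤ 1 and h < a·q̄, the unique Nash equilibrium of problem (P2) (with all banks facing the same price q̄) is symmetric, s_i = s^VWAP(q,q̄) for all i, where s^VWAP(q,q̄) = max( (h − a q)/(q̄ − q) , min( 2r/(α(1+r)(n+1)) , h/q̄ ) ). -/

import Mathlib

/-!
With the others' total sale `T` fixed, bank `i`'s cost is a convex quadratic in its own sale `x`,
namely `(1+r)α/2 · (x - v)² + const` with vertex `v = c₀ - T/2`, `c₀ = r/((1+r)α)`, and the
feasible set of (P2) is an interval `[L, U]`. So the unique best response is the projection of `v`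
onto `[L, U]`. In an equilibrium with total `S` this reads `sᵢ = clamp(c₀ - S/2 + sᵢ/2)`; as
clamping is monotone and 1-Lipschitz, `y ↦ clamp(e + y/2)` has at most one fixed point, so all
`sᵢ` coincide. Their common value is then a fixed point of the antitone map
`y ↦ clamp(c₀ - (n-1)y/2)`, which has exactly one: the clamp of the fixed point
`2r/(α(1+r)(n+1))` of the unclamped map.
-/

noncomputable section

/-- The domain `D = ∏ [0, aᵢ]` of admissible liquidation vectors. -/
def memD (n : ℕ) (a s : Fin n → ℝ) : Prop := ∀ i, s i ∈ Set.Icc 0 (a i)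

/-- Bank `i`'s cost: realized loss from sales plus interest on the borrowed amount. -/
def obj (n : ℕ) (r : ℝ) (h : Fin n → ℝ) (fbar : Fin n → (Fin n → ℝ) → ℝ)
    (i : Fin n) (s : Fin n → ℝ) : ℝ :=
  s i * (1 - fbar i s) + r * (h i - s i * fbar i s)

/-- Feasibility in problem (P2) with fixed prices `(q, q̄)`. -/
def feasP2 (n : ℕ) (a h : Fin n → ℝ) (q : ℝ) (qb : Fin n → ℝ) (i : Fin n) (x : ℝ) : Prop :=
  x ∈ Set.Icc 0 (a i) ∧ x ≤ h i / qb i ∧ (h i - a i * q) / (qb i - q) ≤ x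

/-- `s` is a Nash equilibrium of problem (P2) at fixed prices `(q, q̄)`. -/
def NashP2 (n : ℕ) (a h : Fin n → ℝ) (r q : ℝ) (qb : Fin n → ℝ)
    (fbar : Fin n → (Fin n → ℝ) → ℝ) (s : Fin n → ℝ) : Prop :=
  ∀ i : Fin n,
    (h i ≤ a i * qb i →
      feasP2 n a h q qb i (s i) ∧
      ∀ x : ℝ, feasP2 n a h q qb i x →
        obj n r h fbar i s ≤ obj n r h fbar i (Function.update s i x)) ∧
    (a i * qb i < h i → s i = a i)

open Function Set

def clamp (L U v : ℝ) : ℝ := max L (min v U)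

section Clamp

variable (L U : ℝ)

lemma clamp_monotone : Monotone (clamp L U) := fun _ _ huv =>
  max_le_max le_rfl (min_le_min huv le_rfl)

lemma clamp_sub_clamp_le {u v : ℝ} (huv : u ≤ v) : clamp L U v - clamp L U u ≤ v - u := by
  simp only [clamp, max_def, min_def]
  split_ifs <;> linarith

variable {L U}

lemma clamp_mem_Icc (hLU : L ≤ U) (v : ℝ) : clamp L U v ∈ Icc L U :=
  ⟨le_max_left _ _, max_le hLU (min_le_right _ _)⟩

lemma clamp_of_mem_Icc {v : ℝ} (hv : v ∈ Icc L U) : clamp L U v = v := by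
  rw [clamp, min_eq_left hv.2, max_eq_right hv.1]

/-- The variational inequality of the projection onto `[L, U]`. -/
lemma sub_clamp_mul_clamp_sub_nonneg {x : ℝ} (hx : x ∈ Icc L U) (v : ℝ) :
    0 ≤ (x - clamp L U v) * (clamp L U v - v) := by
  simp only [clamp, max_def, min_def]
  split_ifs <;> nlinarith [hx.1, hx.2]

lemma isMinOn_sq_sub_iff (hLU : L ≤ U) {y : ℝ} (hy : y ∈ Icc L U) (v : ℝ) :
    IsMinOn (fun x => (x - v) ^ 2) (Icc L U) y ↔ y = clamp L U v := by
  have key : ∀ x ∈ Icc L U, (clamp L U v - v) ^ 2 + (x - clamp L U v) ^ 2 ≤ (x - v) ^ 2 :=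
    fun x hx => by nlinarith [sub_clamp_mul_clamp_sub_nonneg hx v]
  rw [isMinOn_iff]
  constructor
  · intro hmin
    have hle := (hmin _ (clamp_mem_Icc hLU v)).trans' (key y hy)
    nlinarith [sq_nonneg (y - clamp L U v)]
  · rintro rfl x hx
    nlinarith [key x hx, sq_nonneg (x - clamp L U v)]

lemma eq_of_eq_clamp_add_mul {e k y y' : ℝ} (hk₀ : 0 ≤ k) (hk₁ : k < 1)
    (hy : y = clamp L U (e + k * y)) (hy' : y' = clamp L U (e + k * y')) : y = y' := by
  wlog hle : y ≤ y' generalizing y y'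
  · exact (this hy' hy (le_of_not_ge hle)).symm
  have hlip := clamp_sub_clamp_le L U (by nlinarith : e + k * y ≤ e + k * y')
  rw [← hy, ← hy'] at hlip
  nlinarith

lemma clamp_isFixedPt_of_antitone (hLU : L ≤ U) {g : ℝ → ℝ} (hg : Antitone g) {m : ℝ}
    (hm : IsFixedPt g m) : IsFixedPt (fun y => clamp L U (g y)) (clamp L U m) := by
  by_cases hmL : m < L
  · have hp : clamp L U m = L := by rw [clamp, min_eq_left (hmL.le.trans hLU), max_eq_left hmL.le]
    have hgL : g L ≤ L := (hg hmL.le).trans (hm.eq.trans_lt hmL).le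
    show clamp L U (g (clamp L U m)) = clamp L U m
    rw [hp, clamp, min_eq_left (hgL.trans hLU), max_eq_left hgL]
  by_cases hUm : U < m
  · have hp : clamp L U m = U := by rw [clamp, min_eq_right hUm.le, max_eq_right hLU]
    have hgU : U ≤ g U := (hUm.trans_le hm.eq.ge).le.trans (hg hUm.le)
    show clamp L U (g (clamp L U m)) = clamp L U m
    rw [hp, clamp, min_eq_right hgU, max_eq_right hLU]
  have hmI : m ∈ Icc L U := ⟨not_lt.1 hmL, not_lt.1 hUm⟩
  show clamp L U (g (clamp L U m)) = clamp L U m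
  rw [clamp_of_mem_Icc hmI, hm.eq, clamp_of_mem_Icc hmI]

end Clamp

lemma antitone_const_sub_mul (c : ℝ) {k : ℝ} (hk : 0 ≤ k) : Antitone fun y : ℝ => c - k * y :=
  fun _ _ hxy => sub_le_sub_left (mul_le_mul_of_nonneg_left hxy hk) _

lemma Antitone.eq_of_isFixedPt {α : Type*} [LinearOrder α] {f : α → α} (hf : Antitone f)
    {x y : α} (hx : IsFixedPt f x) (hy : IsFixedPt f y) : x = y := by
  rcases lt_trichotomy x y with hxy | hxy | hxy
  · exact absurd (hy.eq ▸ hx.eq ▸ hf hxy.le) hxy.not_ge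
  · exact hxy
  · exact absurd (hx.eq ▸ hy.eq ▸ hf hxy.le) hxy.not_ge

/-- Under VWAP pricing every bank receives the average price `1 - (α/2) ∑ⱼ sⱼ` of the book
`f(s) = 1 - αs` over the total volume sold. -/
def fbarVWAP (n : ℕ) (α : ℝ) : Fin n → (Fin n → ℝ) → ℝ := fun _ s => 1 - (α / 2) * ∑ j, s j

section VWAP

variable {n : ℕ} {r α : ℝ}

lemma obj_update_sub_obj_update (hα : α ≠ 0) (hr : 1 + r ≠ 0) (h s : Fin n → ℝ) (i : Fin n)
    (x y : ℝ) :
    obj n r h (fbarVWAP n α) i (update s i x) - obj n r h (fbarVWAP n α) i (update s i y) =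
      (1 + r) * α / 2 * ((x - (r / ((1 + r) * α) - (∑ j, s j - s i) / 2)) ^ 2
        - (y - (r / ((1 + r) * α) - (∑ j, s j - s i) / 2)) ^ 2) := by
  simp only [obj, fbarVWAP, update_self, Finset.sum_update_of_mem (Finset.mem_univ i),
    Finset.sdiff_singleton_eq_erase, Finset.sum_erase_eq_sub (Finset.mem_univ i)]
  field_simp
  ring

lemma isMinOn_obj_update_iff (hα : 0 < α) (hr : 0 < 1 + r) {L U : ℝ} (hLU : L ≤ U)
    (h s : Fin n → ℝ) (i : Fin n) {y : ℝ} (hy : y ∈ Icc L U) :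
    IsMinOn (fun x => obj n r h (fbarVWAP n α) i (update s i x)) (Icc L U) y ↔
      y = clamp L U (r / ((1 + r) * α) - (∑ j, s j - s i) / 2) := by
  rw [← isMinOn_sq_sub_iff hLU hy, isMinOn_iff, isMinOn_iff]
  have hC : 0 < (1 + r) * α / 2 := by positivity
  refine forall₂_congr fun x _ => ?_
  rw [← sub_nonneg, obj_update_sub_obj_update hα.ne' hr.ne', ← sub_nonneg (b := (y - _) ^ 2)]
  exact ⟨fun hle => nonneg_of_mul_nonneg_right (by linarith) hC, mul_nonneg hC.le⟩

lemma nashP2_fbarVWAP_iff (hα : 0 < α) (hr : 0 < 1 + r) {a h q qb L U : ℝ}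
    (hsolv : h ≤ a * qb) (hLU : L ≤ U)
    (hfeas : ∀ i x, feasP2 n (fun _ => a) (fun _ => h) q (fun _ => qb) i x ↔ x ∈ Icc L U)
    (s : Fin n → ℝ) :
    NashP2 n (fun _ => a) (fun _ => h) r q (fun _ => qb) (fbarVWAP n α) s ↔
      ∀ i, s i = clamp L U (r / ((1 + r) * α) - (∑ j, s j - s i) / 2) := by
  refine forall_congr' fun i => ?_
  simp only [hfeas, hsolv, not_lt.2 hsolv, true_implies, false_implies, and_true]
  have hself : obj n r (fun _ => h) (fbarVWAP n α) i s =
      obj n r (fun _ => h) (fbarVWAP n α) i (update s i (s i)) := by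
    rw [update_eq_self]
  rw [hself]
  constructor
  · exact fun ⟨hy, hmin⟩ => (isMinOn_obj_update_iff hα hr hLU _ s i hy).1 (isMinOn_iff.2 hmin)
  · intro hs
    have hy : s i ∈ Icc L U := hs ▸ clamp_mem_Icc hLU _
    exact ⟨hy, isMinOn_iff.1 ((isMinOn_obj_update_iff hα hr hLU _ s i hy).2 hs)⟩

lemma isFixedPt_clamp_symmetric_best_response (hn : 1 ≤ n) (hα : α ≠ 0) (hr : 1 + r ≠ 0)
    {L U : ℝ} (hLU : L ≤ U) :
    IsFixedPt (fun y => clamp L U (r / ((1 + r) * α) - ((n : ℝ) - 1) / 2 * y))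
      (clamp L U (2 * r / (α * (1 + r) * ((n : ℝ) + 1)))) := by
  have hn' : (1 : ℝ) ≤ n := by exact_mod_cast hn
  refine clamp_isFixedPt_of_antitone hLU (antitone_const_sub_mul _ (by linarith)) ?_
  simp only [IsFixedPt]
  field_simp
  ring

end VWAP

lemma sub_mul_div_sub_le_div {a h q qb : ℝ} (hq : 0 ≤ q) (hlt : q < qb) (hsolv : h ≤ a * qb) :
    (h - a * q) / (qb - q) ≤ h / qb := by
  rw [div_le_div_iff₀ (by linarith) (by linarith)]
  nlinarith [mul_le_mul_of_nonneg_right hsolv hq]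

lemma feasP2_iff {n : ℕ} {a h qb : Fin n → ℝ} {q : ℝ} {i : Fin n} (hU : h i / qb i ≤ a i)
    (x : ℝ) :
    feasP2 n a h q qb i x ↔ x ∈ Icc (max 0 ((h i - a i * q) / (qb i - q))) (h i / qb i) := by
  simp only [feasP2, mem_Icc, max_le_iff]
  exact ⟨fun ⟨⟨h0, _⟩, hU', hl⟩ => ⟨⟨h0, hl⟩, hU'⟩,
    fun ⟨⟨h0, hl⟩, hU'⟩ => ⟨⟨h0, hU'.trans hU⟩, hU', hl⟩⟩

lemma forall_eq_clamp_iff_eq_const {n : ℕ} (hn : 1 ≤ n) {L U c y₀ : ℝ}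
    (hy₀ : IsFixedPt (fun y => clamp L U (c - ((n : ℝ) - 1) / 2 * y)) y₀) (s : Fin n → ℝ) :
    (∀ i, s i = clamp L U (c - (∑ j, s j - s i) / 2)) ↔ s = fun _ => y₀ := by
  have hsum_const : ∀ y : ℝ, ∑ _j : Fin n, y - y = ((n : ℝ) - 1) * y := fun y => by
    simp only [Finset.sum_const, Finset.card_univ, Fintype.card_fin, nsmul_eq_mul]
    ring
  have hanti : Antitone fun y => clamp L U (c - ((n : ℝ) - 1) / 2 * y) := by
    have : (1 : ℝ) ≤ n := by exact_mod_cast hn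
    exact (clamp_monotone L U).comp_antitone (antitone_const_sub_mul c (by linarith))
  constructor
  · intro hs
    have hshift : ∀ i, s i = clamp L U ((c - (∑ j, s j) / 2) + 1 / 2 * s i) := fun i =>
      (hs i).trans (congrArg (clamp L U) (by ring))
    funext i
    have hconst : s = fun _ => s i :=
      funext fun j => eq_of_eq_clamp_add_mul (by norm_num) (by norm_num) (hshift j) (hshift i)
    refine hanti.eq_of_isFixedPt ?_ hy₀
    have := hs i
    rw [hconst, hsum_const] at this
    exact (this.trans (congrArg (clamp L U) (by ring))).symm
  · rintro rfl i
    rw [hsum_const]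
    convert hy₀.eq.symm using 2
    ring

theorem symmetric_vwap_equilibrium_general
    (n : ℕ) (hn : 2 ≤ n) (a h r α : ℝ)
    (ha : 0 < a) (hh : 0 < h)
    (hr : r ∈ Set.Ioo (0 : ℝ) (1/3))
    (hα : α ∈ Set.Ioo (2*r / ((1+r) * ((n : ℝ)+1) * a)) (1 / (2*(n : ℝ)*a)))
    (q qb : ℝ) (hq : 0 ≤ q) (hlt : q < qb)
    (hsolv : h < a * qb)
    (fbar : Fin n → (Fin n → ℝ) → ℝ)
    (hfbar : fbar = fun _ s => 1 - (α/2) * ∑ j, s j)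
    (sv : ℝ)
    (hsv : sv = max ((h - a*q) / (qb - q))
        (min (2*r / (α*(1+r)*((n : ℝ)+1))) (h/qb))) :
    (memD n (fun _ => a) (fun _ => sv) ∧
      NashP2 n (fun _ => a) (fun _ => h) r q (fun _ => qb) fbar (fun _ => sv)) ∧
    ∀ s : Fin n → ℝ, memD n (fun _ => a) s →
      NashP2 n (fun _ => a) (fun _ => h) r q (fun _ => qb) fbar s →
      s = fun _ => sv := by
  obtain ⟨hr0, -⟩ := hr
  have hα0 : 0 < α := lt_trans (by positivity) hα.1
  have hqb0 : 0 < qb := hq.trans_lt hlt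
  have hUa : h / qb ≤ a := (div_le_iff₀ hqb0).2 (by linarith)
  have hLU : max 0 ((h - a * q) / (qb - q)) ≤ h / qb :=
    max_le (by positivity) (sub_mul_div_sub_le_div hq hlt hsolv.le)
  have hsv_clamp : sv = clamp (max 0 ((h - a * q) / (qb - q))) (h / qb)
      (2 * r / (α * (1 + r) * ((n : ℝ) + 1))) := by
    have hm0 : 0 ≤ 2 * r / (α * (1 + r) * ((n : ℝ) + 1)) := by positivity
    rw [hsv, clamp, max_assoc, max_eq_right (le_max_of_le_right (le_min hm0 (by positivity)))]
  have hsym := forall_eq_clamp_iff_eq_const (by omega) (hsv_clamp ▸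
    isFixedPt_clamp_symmetric_best_response (by omega) hα0.ne' (by linarith) hLU)
  have hnash := nashP2_fbarVWAP_iff (n := n) hα0 (by linarith : (0 : ℝ) < 1 + r) hsolv.le hLU
    (fun _ x => feasP2_iff hUa x)
  have hsvI := hsv_clamp ▸ clamp_mem_Icc hLU _
  subst hfbar
  exact ⟨⟨fun _ => ⟨(le_max_left _ _).trans hsvI.1, hsvI.2.trans hUa⟩,
    (hnash _).2 ((hsym _).2 rfl)⟩, fun s _ hs => (hsym s).1 ((hnash s).1 hs)⟩

/-- in the symmetric VWAP setting with `f(s) = 1 − αs` (so that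
`f̄ᵢ(s) = 1 − (α/2)∑ⱼ sⱼ`), for any fixed prices `0 ≤ q < q̄ ≤ 1` with `h < a·q̄`, the
unique Nash equilibrium of (P2) is symmetric, with every bank liquidating
`s^VWAP(q,q̄) = max((h − aq)/(q̄ − q), min(2r/(α(1+r)(n+1)), h/q̄))`. -/
theorem symmetric_vwap_equilibrium
    (n : ℕ) (hn : 2 ≤ n) (a h r α : ℝ)
    (ha : 0 < a) (hh : 0 < h)
    (hr : r ∈ Set.Ioo (0 : ℝ) (1/3))
    (hα : α ∈ Set.Ioo (2*r / ((1+r) * ((n : ℝ)+1) * a)) (1 / (2*(n : ℝ)*a)))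
    (q qb : ℝ) (hq : 0 ≤ q) (hlt : q < qb) (hqb : qb ≤ 1)
    (hsolv : h < a * qb)
    (fbar : Fin n → (Fin n → ℝ) → ℝ)
    (hfbar : fbar = fun _ s => 1 - (α/2) * ∑ j, s j)
    (sv : ℝ)
    (hsv : sv = max ((h - a*q) / (qb - q))
        (min (2*r / (α*(1+r)*((n : ℝ)+1))) (h/qb))) :
    (memD n (fun _ => a) (fun _ => sv) ∧
      NashP2 n (fun _ => a) (fun _ => h) r q (fun _ => qb) fbar (fun _ => sv)) ∧
    ∀ s : Fin n → ℝ, memD n (fun _ => a) s →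
      NashP2 n (fun _ => a) (fun _ => h) r q (fun _ => qb) fbar s →
      s = fun _ => sv :=
  symmetric_vwap_equilibrium_general n hn a h r α ha hh hr hα q qb hq hlt hsolv fbar hfbar sv hsv
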